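/- arXiv:1306.3925 — 8 statements merged into one kernel-verified Lean document; each statement's English description precedes it below -/
import Mathlib

section
/- Let N be a natural number, let U be a linear isometric equivalence of the Euclidean space ℝ^N (with its standard inner product and Lebesgue measure), and let S ⊆ ℝ^N be a bounded measurable set with U(S) = S. Then for every measurable set A ⊆ S, the set of points x ∈ A such that U^[n] x ∉ A for every integer n > 0 has Lebesgue measure zero. -/
open MeasureTheory

/-! Restricted to the bounded invariant set `S`, Lebesgue measure is finite and still preserved by
the isometry `U` (isometries preserve volume, and `U⁻¹ S = S`). A map preserving a finite measure is
conservative, so Poincaré recurrence applies to every measurable `A ⊆ S`. -/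

namespace MeasureTheory.MeasurePreserving

variable {α : Type*} [MeasurableSpace α] {μ : Measure α} {f : α → α}

theorem conservative_restrict_of_preimage_eq (hf : MeasurePreserving f μ μ)
    (hfe : MeasurableEmbedding f) {s : Set α} (hs : f ⁻¹' s = s) (hμs : μ s ≠ ⊤) :
    Conservative f (μ.restrict s) :=
  have : IsFiniteMeasure (μ.restrict s) := isFiniteMeasure_restrict.2 hμs
  (hs ▸ hf.restrict_preimage_emb hfe s).conservative

theorem measure_setOf_forall_iterate_notMem_eq_zero (hf : MeasurePreserving f μ μ)
    (hfe : MeasurableEmbedding f) {s : Set α} (hs : f ⁻¹' s = s) (hμs : μ s ≠ ⊤)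
    {A : Set α} (hAs : A ⊆ s) (hA : NullMeasurableSet A μ) :
    μ {x ∈ A | ∀ n, 0 < n → f^[n] x ∉ A} = 0 := by
  rw [← Measure.restrict_eq_self (μ := μ) fun x hx ↦ hAs hx.1]
  exact (hf.conservative_restrict_of_preimage_eq hfe hs hμs)
    |>.measure_mem_forall_ge_image_notMem_eq_zero (hA.mono Measure.restrict_le_self) 1

end MeasureTheory.MeasurePreserving

theorem linear_recurrence_volume_general (N : ℕ)
    (U : EuclideanSpace ℝ (Fin N) ≃ₗᵢ[ℝ] EuclideanSpace ℝ (Fin N))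
    (S : Set (EuclideanSpace ℝ (Fin N)))
    (hSb : Bornology.IsBounded S) (hSinv : U '' S = S)
    (A : Set (EuclideanSpace ℝ (Fin N))) (hAS : A ⊆ S) (hAm : MeasurableSet A) :
    volume {x ∈ A | ∀ n : ℕ, 0 < n → (⇑U)^[n] x ∉ A} = 0 :=
  U.measurePreserving.measure_setOf_forall_iterate_notMem_eq_zero
    U.toMeasurableEquiv.measurableEmbedding
    ((Set.preimage_eq_iff_eq_image U.bijective).2 hSinv.symm) hSb.measure_lt_top.ne hAS
    hAm.nullMeasurableSet

/-- **Linear Recurrence Theorem (preliminary, volume form).** For a linear isometric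
equivalence `U` of Euclidean space `ℝ^N` and a bounded measurable `U`-invariant set `S`,
almost every point (w.r.t. Lebesgue measure) of any measurable `A ⊆ S` eventually
returns to `A`. -/
theorem linear_recurrence_volume (N : ℕ)
    (U : EuclideanSpace ℝ (Fin N) ≃ₗᵢ[ℝ] EuclideanSpace ℝ (Fin N))
    (S : Set (EuclideanSpace ℝ (Fin N)))
    (hSb : Bornology.IsBounded S) (hSm : MeasurableSet S) (hSinv : U '' S = S)
    (A : Set (EuclideanSpace ℝ (Fin N))) (hAS : A ⊆ S) (hAm : MeasurableSet A) :
    volume {x ∈ A | ∀ n : ℕ, 0 < n → (⇑U)^[n] x ∉ A} = 0 :=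
  linear_recurrence_volume_general N U S hSb hSinv A hAS hAm
end

section
/- Let V be a finite-dimensional inner product space (over ℝ or ℂ) and let U : V ≃ V be a linear isometric equivalence. Then for every v ∈ V and every ε > 0 there exists an integer n > 0 such that ‖U^n v − v‖ < ε. -/
/-!
For an isometry `f` and `m ≤ n`, `dist (f^[n] x) (f^[m] x) = dist (f^[n - m] x) x`.
If the orbit of `x` stays in a compact set, it has a convergent, hence Cauchy, subsequence, so two iterates `f^[m] x`, `f^[n] x` with `m < n` are `ε`-close, and then so are
`x` and `f^[n - m] x`. The orbit of a vector under a linear isometry lies on a sphere, which is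
compact in finite dimension.
-/

open Function Metric

namespace Isometry

variable {X : Type*}

theorem iterate [PseudoEMetricSpace X] {f : X → X} (hf : Isometry f) (n : ℕ) :
    Isometry f^[n] := by
  induction n with
  | zero => exact isometry_id
  | succ k ih => exact ih.comp hf

variable [PseudoMetricSpace X] {f : X → X}

theorem dist_iterate_eq_dist_iterate_sub (hf : Isometry f) (x : X) {m n : ℕ} (hmn : m ≤ n) :
    dist (f^[n] x) (f^[m] x) = dist (f^[n - m] x) x := by
  have hsplit : f^[n] x = f^[m] (f^[n - m] x) := by
    rw [← iterate_add_apply, Nat.add_sub_cancel' hmn]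
  rw [hsplit, (hf.iterate m).dist_eq]

theorem exists_pos_iterate_dist_lt_of_isCompact (hf : Isometry f) {K : Set X}
    (hK : IsCompact K) {x : X} (hx : ∀ n, f^[n] x ∈ K) {ε : ℝ} (hε : 0 < ε) :
    ∃ n, 0 < n ∧ dist (f^[n] x) x < ε := by
  obtain ⟨_, -, φ, hφ, hlim⟩ := hK.tendsto_subseq hx
  obtain ⟨N, hN⟩ := Metric.cauchySeq_iff.mp hlim.cauchySeq ε hε
  have hlt : φ N < φ (N + 1) := hφ N.lt_succ_self
  refine ⟨φ (N + 1) - φ N, Nat.sub_pos_of_lt hlt, ?_⟩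
  rw [← hf.dist_iterate_eq_dist_iterate_sub x hlt.le]
  exact hN (N + 1) N.le_succ N le_rfl

end Isometry

theorem LinearIsometryEquiv.norm_iterate_apply {𝕜 E : Type*} [Semiring 𝕜]
    [SeminormedAddCommGroup E] [Module 𝕜 E] (U : E ≃ₗᵢ[𝕜] E) (n : ℕ) (v : E) :
    ‖(⇑U)^[n] v‖ = ‖v‖ := by
  have hzero : (⇑U)^[n] 0 = 0 := iterate_fixed (map_zero U) n
  rw [← dist_zero_right, ← hzero, (U.isometry.iterate n).dist_eq, dist_zero_right]

/-- **Linear recurrence in metric (pointwise).** For a linear isometric equivalence `U`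
of a finite-dimensional inner product space over `ℝ` or `ℂ`, every vector returns
arbitrarily close to itself under iteration of `U`. -/
theorem linear_recurrence_metric {𝕜 : Type*} [RCLike 𝕜] {V : Type*}
    [NormedAddCommGroup V] [InnerProductSpace 𝕜 V] [FiniteDimensional 𝕜 V]
    (U : V ≃ₗᵢ[𝕜] V) (v : V) (ε : ℝ) (hε : 0 < ε) :
    ∃ n : ℕ, 0 < n ∧ ‖(⇑U)^[n] v - v‖ < ε := by
  have : ProperSpace V := FiniteDimensional.proper_rclike 𝕜 V
  have horbit : ∀ n, (⇑U)^[n] v ∈ sphere (0 : V) ‖v‖ := fun n => by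
    rw [mem_sphere_zero_iff_norm, U.norm_iterate_apply]
  simpa only [dist_eq_norm] using
    U.isometry.exists_pos_iterate_dist_lt_of_isCompact (isCompact_sphere 0 ‖v‖) horbit hε
end

section
/- Let V be a finite-dimensional inner product space (over ℝ or ℂ) and let U : V ≃ V be a linear isometric equivalence. Then for every ε > 0 and every D > 0 there exists an integer n > 0 such that for all v ∈ V with ‖v‖ ≤ D, ‖U^n v − v‖ < ε. -/
/-!
The operators `f ^ k` all lie in the closed unit ball of the finite-dimensional space
`E →L[𝕜] E`, which is compact, so two of them, `f ^ m` and `f ^ (m + n)`, are `δ`-close in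
operator norm. As `f ^ m` is an isometry, `f ^ n` is then `δ`-close to the identity.
-/

open Metric

theorem IsCompact.exists_lt_dist_lt {X : Type*} [PseudoMetricSpace X] {K : Set X}
    (hK : IsCompact K) {x : ℕ → X} (hx : ∀ n, x n ∈ K) {δ : ℝ} (hδ : 0 < δ) :
    ∃ m n, m < n ∧ dist (x n) (x m) < δ := by
  obtain ⟨_, -, φ, hφ, hlim⟩ := hK.tendsto_subseq hx
  obtain ⟨N, hN⟩ := Metric.cauchySeq_iff'.mp hlim.cauchySeq δ hδ
  exact ⟨φ N, φ (N + 1), hφ N.lt_succ_self, hN (N + 1) N.le_succ⟩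

namespace LinearIsometry

variable {𝕜 E : Type*} [NontriviallyNormedField 𝕜]

theorem norm_pow_apply_sub_self_le [SeminormedAddCommGroup E] [NormedSpace 𝕜 E]
    (f : E →ₗᵢ[𝕜] E) (m n : ℕ) (v : E) :
    ‖(f ^ n) v - v‖ ≤
      ‖(f ^ (m + n)).toContinuousLinearMap - (f ^ m).toContinuousLinearMap‖ * ‖v‖ := by
  calc ‖(f ^ n) v - v‖ = ‖(f ^ m) ((f ^ n) v) - (f ^ m) v‖ := by rw [← map_sub, norm_map]
    _ = ‖((f ^ (m + n)).toContinuousLinearMap - (f ^ m).toContinuousLinearMap) v‖ := by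
      rw [pow_add]; rfl
    _ ≤ _ := ContinuousLinearMap.le_opNorm _ _

theorem exists_pos_norm_pow_apply_sub_le [NormedAddCommGroup E] [NormedSpace 𝕜 E]
    [LocallyCompactSpace 𝕜] [FiniteDimensional 𝕜 E] (f : E →ₗᵢ[𝕜] E) {δ : ℝ} (hδ : 0 < δ) :
    ∃ n, 0 < n ∧ ∀ v, ‖(f ^ n) v - v‖ ≤ δ * ‖v‖ := by
  have : ProperSpace (E →L[𝕜] E) := FiniteDimensional.proper 𝕜 _
  obtain ⟨m, k, hmk, hdist⟩ := (isCompact_closedBall (0 : E →L[𝕜] E) 1).exists_lt_dist_lt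
    (x := fun k ↦ (f ^ k).toContinuousLinearMap)
    (fun k ↦ mem_closedBall_zero_iff.mpr (norm_toContinuousLinearMap_le _)) hδ
  refine ⟨k - m, Nat.sub_pos_of_lt hmk, fun v ↦ ?_⟩
  calc ‖(f ^ (k - m)) v - v‖
      ≤ ‖(f ^ (m + (k - m))).toContinuousLinearMap - (f ^ m).toContinuousLinearMap‖ * ‖v‖ :=
        norm_pow_apply_sub_self_le f m (k - m) v
    _ ≤ δ * ‖v‖ := by
      rw [Nat.add_sub_cancel' hmk.le, ← dist_eq_norm]
      gcongr

end LinearIsometry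

theorem linear_uniform_recurrence_metric_general {𝕜 : Type*} [RCLike 𝕜] {V : Type*}
    [NormedAddCommGroup V] [InnerProductSpace 𝕜 V] [FiniteDimensional 𝕜 V]
    (U : V ≃ₗᵢ[𝕜] V) (ε D : ℝ) (hε : 0 < ε) :
    ∃ n : ℕ, 0 < n ∧ ∀ v : V, ‖v‖ ≤ D → ‖(⇑U)^[n] v - v‖ < ε := by
  obtain ⟨n, hn, hU⟩ := U.toLinearIsometry.exists_pos_norm_pow_apply_sub_le
    (by positivity : 0 < ε / (|D| + 1))
  refine ⟨n, hn, fun v hv ↦ ?_⟩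
  rw [← U.coe_toLinearIsometry, ← LinearIsometry.coe_pow]
  calc ‖(U.toLinearIsometry ^ n) v - v‖ ≤ ε / (|D| + 1) * ‖v‖ := hU v
    _ ≤ ε / (|D| + 1) * |D| := by gcongr; exact hv.trans (le_abs_self D)
    _ < ε := by
      rw [div_mul_eq_mul_div, div_lt_iff₀ (by positivity)]
      nlinarith

/-- **Linear Recurrence Theorem (uniform).** For a linear isometric equivalence `U` of a
finite-dimensional inner product space over `ℝ` or `ℂ`, and any bound `D`, for every
`ε > 0` there is a single `n > 0` such that every vector of norm at most `D` returns
within `ε` of itself after `n` steps. -/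
theorem linear_uniform_recurrence_metric {𝕜 : Type*} [RCLike 𝕜] {V : Type*}
    [NormedAddCommGroup V] [InnerProductSpace 𝕜 V] [FiniteDimensional 𝕜 V]
    (U : V ≃ₗᵢ[𝕜] V) (ε D : ℝ) (hε : 0 < ε) (hD : 0 < D) :
    ∃ n : ℕ, 0 < n ∧ ∀ v : V, ‖v‖ ≤ D → ‖(⇑U)^[n] v - v‖ < ε :=
  linear_uniform_recurrence_metric_general U ε D hε
end

section
/- Let τ > 0, and let E : ℕ → ℝ be a monotone nondecreasing sequence of real numbers (the energy eigenvalues) with E i ≥ 0 for all i. Let α : ℕ → ℂ satisfy ∑'_i ‖α i‖² = 1 (the expansion coefficients of a unit vector in the energy eigenbasis). Then for every ε > 0 there exists an integer n > 0 such that ∑'_i ‖α i‖² · ‖exp(−i·(E i)·τ·n) − 1‖² < ε², where i in the exponent denotes the imaginary unit. -/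
/-!
The phases `n ↦ (e^{-i E_j τ n})_j` of finitely many eigenstates form the orbit of a single
element of the compact group `s → Circle`, and in a compact group every element has powers
`g ^ n`, `n > 0`, arbitrarily close to `1`: take two powers near a cluster point of the orbit and
divide them. Choosing the finite set `s` so that the weights outside it sum to less than `ε² / 8`,
those outer terms contribute at most `4 · ε² / 8`, while the terms in `s` contribute at most
`ε² / 4` once all their phases are within `ε / 2` of `1`.
-/

open Filter Topology Complex

theorem exists_pow_mem_of_mem_nhds_one {G : Type*} [Group G] [TopologicalSpace G]
    [IsTopologicalGroup G] [CompactSpace G] (g : G) {U : Set G} (hU : U ∈ 𝓝 1) :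
    ∃ n : ℕ, 0 < n ∧ g ^ n ∈ U := by
  obtain ⟨V, hV, hVU⟩ := exists_nhds_split_inv hU
  obtain ⟨x, hx⟩ := exists_clusterPt_of_compactSpace (map (g ^ ·) atTop)
  have hVx : (· * x⁻¹) ⁻¹' V ∈ 𝓝 x := by
    rw [← nhds_translation_mul_inv]
    exact preimage_mem_comap hV
  have hfreq := frequently_atTop.mp (mapClusterPt_iff_frequently.mp hx _ hVx)
  obtain ⟨k, -, hk⟩ := hfreq 0
  obtain ⟨m, hkm, hm⟩ := hfreq (k + 1)
  refine ⟨m - k, by omega, ?_⟩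
  -- both powers lie in `V * x`, so their quotient lies in `V / V ⊆ U`
  have hquot : g ^ m * x⁻¹ / (g ^ k * x⁻¹) ∈ U := hVU _ hm _ hk
  rwa [mul_div_mul_right_eq_div, div_eq_mul_inv, ← pow_sub _ (by omega)] at hquot

theorem exists_forall_norm_exp_mul_I_sub_one_lt {ι : Type*} [Fintype ι] (θ : ι → ℝ) {δ : ℝ}
    (hδ : 0 < δ) : ∃ n : ℕ, 0 < n ∧ ∀ j, ‖exp (↑(n * θ j) * I) - 1‖ < δ := by
  obtain ⟨n, hn, hball⟩ := exists_pow_mem_of_mem_nhds_one (fun j => Circle.exp (θ j))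
    (Metric.ball_mem_nhds (1 : ι → Circle) hδ)
  refine ⟨n, hn, fun j => ?_⟩
  calc ‖exp (↑(n * θ j) * I) - 1‖ = dist (Circle.exp (n * θ j) : ℂ) (1 : Circle) := by
        rw [dist_eq_norm, Circle.coe_exp, Circle.coe_one]
    _ = dist (Circle.exp (n * θ j)) 1 := rfl
    _ ≤ dist ((fun j => Circle.exp (θ j)) ^ n) 1 := by
        simpa only [Pi.pow_apply, Pi.one_apply, Circle.exp_natCast_mul]
          using dist_le_pi_dist ((fun j => Circle.exp (θ j)) ^ n) 1 j
    _ < δ := hball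

theorem norm_exp_ofReal_mul_I_sub_one_le_two (x : ℝ) : ‖exp (x * I) - 1‖ ≤ 2 :=
  (norm_sub_le _ _).trans (by simp [norm_exp_ofReal_mul_I]; norm_num)

theorem tsum_mul_le_of_forall_mem_le {ι : Type*} {w f : ι → ℝ} {C η : ℝ} (s : Finset ι)
    (hw : ∀ i, 0 ≤ w i) (hws : Summable w) (hf : ∀ i, 0 ≤ f i) (hfC : ∀ i, f i ≤ C)
    (hη : 0 ≤ η) (hfs : ∀ i ∈ s, f i ≤ η) :
    ∑' i, w i * f i ≤ η * ∑' i, w i + C * ∑' i : {i // i ∉ s}, w i := by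
  have hCw : ∀ i, w i * f i ≤ C * w i := fun i => by
    rw [mul_comm C]; exact mul_le_mul_of_nonneg_left (hfC i) (hw i)
  have hwf : Summable fun i => w i * f i :=
    (hws.mul_left C).of_nonneg_of_le (fun i => mul_nonneg (hw i) (hf i)) hCw
  rw [← hwf.sum_add_tsum_compl (s := s)]
  gcongr
  · calc ∑ i ∈ s, w i * f i ≤ ∑ i ∈ s, η * w i :=
          Finset.sum_le_sum fun i hi => by
            rw [mul_comm η]; exact mul_le_mul_of_nonneg_left (hfs i hi) (hw i)
      _ = η * ∑ i ∈ s, w i := (Finset.mul_sum ..).symm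
      _ ≤ η * ∑' i, w i := by gcongr; exact hws.sum_le_tsum s fun i _ => hw i
  · calc ∑' i : {i // i ∉ s}, w i * f i ≤ ∑' i : {i // i ∉ s}, C * w i :=
          (hwf.subtype _).tsum_le_tsum (fun i => hCw i) ((hws.mul_left C).subtype _)
      _ = C * ∑' i : {i // i ∉ s}, w i := tsum_mul_left

theorem quantum_recurrence_general (τ : ℝ) (E : ℕ → ℝ) (α : ℕ → ℂ) (hα : ∑' i, ‖α i‖ ^ 2 = 1)
    (ε : ℝ) (hε : 0 < ε) :
    ∃ n : ℕ, 0 < n ∧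
      ∑' i, ‖α i‖ ^ 2 * ‖Complex.exp (-Complex.I * (E i) * τ * n) - 1‖ ^ 2 < ε ^ 2 := by
  have hsum : Summable fun i => ‖α i‖ ^ 2 := by
    by_contra h
    simp [tsum_eq_zero_of_not_summable h] at hα
  obtain ⟨s, hs⟩ : ∃ s : Finset ℕ, ∑' i : {i // i ∉ s}, ‖α i‖ ^ 2 < ε ^ 2 / 8 :=
    ((tendsto_tsum_compl_atTop_zero fun i => ‖α i‖ ^ 2).eventually
      (gt_mem_nhds (by positivity))).exists
  obtain ⟨n, hn, hphase⟩ :=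
    exists_forall_norm_exp_mul_I_sub_one_lt (fun i : s => -(E i * τ)) (half_pos hε)
  refine ⟨n, hn, ?_⟩
  have hexp : ∀ i, -I * E i * τ * n = ↑(n * -(E i * τ)) * I := fun i => by push_cast; ring
  simp_rw [hexp]
  have hbound := tsum_mul_le_of_forall_mem_le (w := fun i => ‖α i‖ ^ 2)
    (f := fun i => ‖exp (↑(n * -(E i * τ)) * I) - 1‖ ^ 2) (C := 2 ^ 2) (η := (ε / 2) ^ 2) s
    (fun i => by positivity) hsum (fun i => by positivity)
    (fun i => pow_le_pow_left₀ (norm_nonneg _) (norm_exp_ofReal_mul_I_sub_one_le_two _) 2)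
    (by positivity) (fun i hi => pow_le_pow_left₀ (norm_nonneg _) (hphase ⟨i, hi⟩).le 2)
  rw [hα] at hbound
  nlinarith

/-- **Quantum recurrence theorem, part (i).** For a quantum state with expansion
coefficients `α` in an orthonormal basis of energy eigenstates with nondecreasing
nonnegative eigenvalues `E`, evolved for time `n·τ`, the squared distance
`∑ ‖α i‖² ‖e^{-i E_i τ n} - 1‖²` back to the initial state can be made `< ε²`
for some `n > 0`. -/
theorem quantum_recurrence (τ : ℝ) (hτ : 0 < τ) (E : ℕ → ℝ) (hE : Monotone E)
    (hE0 : ∀ i, 0 ≤ E i) (α : ℕ → ℂ) (hα : ∑' i, ‖α i‖ ^ 2 = 1)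
    (ε : ℝ) (hε : 0 < ε) :
    ∃ n : ℕ, 0 < n ∧
      ∑' i, ‖α i‖ ^ 2 * ‖Complex.exp (-Complex.I * (E i) * τ * n) - 1‖ ^ 2 < ε ^ 2 :=
  quantum_recurrence_general τ E α hα ε hε
end

section
/- Let X be a pseudometric space whose universal set is totally bounded, and let U : X → X satisfy dist (U x) (U y) = dist x y for all x, y ∈ X. Then for every x ∈ X and every ε > 0 there exists an integer n > 0 such that dist (U^[n] x) x < ε. -/
/-- **Metric Recurrence Theorem.** Any totally bounded, metric-preserving dynamical
system on a pseudometric space is recurrent in metric. -/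
theorem metric_recurrence {X : Type*} [PseudoMetricSpace X]
    (hX : TotallyBounded (Set.univ : Set X))
    (U : X → X) (hU : ∀ x y : X, dist (U x) (U y) = dist x y)
    (x : X) (ε : ℝ) (hε : 0 < ε) :
    ∃ n : ℕ, 0 < n ∧ dist (U^[n] x) x < ε := by
  have hiter : ∀ (k : ℕ) (a b : X), dist (U^[k] a) (U^[k] b) = dist a b := by
    intro k
    induction k with
    | zero => intro a b; simp
    | succ k ih =>
      intro a b
      rw [Function.iterate_succ']
      simp only [Function.comp_apply, hU, ih]
  obtain ⟨t, ht, hcov⟩ := (Metric.totallyBounded_iff).mp hX (ε/2) (by linarith)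
  have hmem : ∀ n : ℕ, ∃ y ∈ t, dist (U^[n] x) y < ε/2 := by
    intro n
    have := hcov (Set.mem_univ (U^[n] x))
    simp only [Set.mem_iUnion, Metric.mem_ball] at this
    obtain ⟨y, hy, hd⟩ := this
    exact ⟨y, hy, hd⟩
  choose f hf hfd using hmem
  have : Finite t := ht.to_subtype
  obtain ⟨n, m, hne, heq⟩ :=
    Finite.exists_ne_map_eq_of_infinite (fun n : ℕ => (⟨f n, hf n⟩ : t))
  have heq' : f n = f m := congrArg Subtype.val heq
  -- wlog n < m
  rcases hne.lt_or_gt with h | h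
  · refine ⟨m - n, by omega, ?_⟩
    have : dist (U^[n] (U^[m-n] x)) (U^[n] x) < ε := by
      rw [← Function.iterate_add_apply]
      have h1 := hfd m
      have h2 := hfd n
      rw [heq'] at h2
      calc dist (U^[n + (m-n)] x) (U^[n] x)
          ≤ dist (U^[n + (m-n)] x) (f m) + dist (U^[n] x) (f m) :=
            dist_triangle_right _ _ _
        _ < ε := by
            have : n + (m - n) = m := by omega
            rw [this]; linarith
    rwa [hiter] at this
  · refine ⟨n - m, by omega, ?_⟩
    have : dist (U^[m] (U^[n-m] x)) (U^[m] x) < ε := by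
      rw [← Function.iterate_add_apply]
      have h1 := hfd n
      have h2 := hfd m
      rw [heq'] at h1
      calc dist (U^[m + (n-m)] x) (U^[m] x)
          ≤ dist (U^[m + (n-m)] x) (f m) + dist (U^[m] x) (f m) :=
            dist_triangle_right _ _ _
        _ < ε := by
            have : m + (n - m) = n := by omega
            rw [this]; linarith
    rwa [hiter] at this
end

section
/- Let S and T be pseudometric spaces whose universal sets are totally bounded, with T a metric space. Then the set of all f in the space of bounded continuous functions from S to T (equipped with the supremum distance d(f,g) = sup_x d(f(x), g(x))) such that f is distance-preserving (dist (f x) (f y) = dist x y for all x, y) is a totally bounded subset. -/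
/-!
Distance-preserving maps are `1`-Lipschitz, and a family of `K`-Lipschitz maps is totally bounded
for the supremum metric: up to a uniform error of order `(K + 1) δ`, a `K`-Lipschitz map is
determined by its values on a finite `δ`-net of the source, rounded to a finite `δ`-net of the
target, and there are only finitely many such rounded tables.
-/

open Set Metric NNReal

namespace BoundedContinuousFunction

variable {α β : Type*} [PseudoMetricSpace α] [PseudoMetricSpace β]

lemma dist_le_of_lipschitzWith_of_forall_mem_net {f g : α →ᵇ β} {K : ℝ≥0}
    (hf : LipschitzWith K f) (hg : LipschitzWith K g) {t : Set α} {δ η : ℝ}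
    (hδ : 0 ≤ δ) (hη : 0 ≤ η) (ht : univ ⊆ ⋃ s ∈ t, ball s δ)
    (hfg : ∀ s ∈ t, dist (f s) (g s) ≤ η) :
    dist f g ≤ 2 * K * δ + η := by
  refine (dist_le (by positivity)).2 fun x => ?_
  obtain ⟨s, hs, hxs⟩ := mem_iUnion₂.1 (ht (mem_univ x))
  have hxs : dist x s ≤ δ := (mem_ball.1 hxs).le
  calc dist (f x) (g x) ≤ dist (f x) (f s) + dist (f s) (g s) + dist (g s) (g x) :=
        dist_triangle4 _ _ _ _
    _ ≤ K * dist x s + η + K * dist s x :=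
        add_le_add_three (hf.dist_le_mul x s) (hfg s hs) (hg.dist_le_mul s x)
    _ ≤ 2 * K * δ + η := by
        rw [dist_comm s x]
        nlinarith [K.coe_nonneg]

theorem totallyBounded_setOf_lipschitzWith (K : ℝ≥0) (hα : TotallyBounded (univ : Set α))
    (hβ : TotallyBounded (univ : Set β)) :
    TotallyBounded {f : α →ᵇ β | LipschitzWith K f} := by
  classical
  refine totallyBounded_of_finite_discretization fun ε hε => ?_
  set δ := ε / (2 * K + 3) with hδ_def
  have hδ : 0 < δ := by positivity
  obtain ⟨tα, htα, hcovα⟩ := totallyBounded_iff.1 hα δ hδ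
  obtain ⟨tβ, htβ, hcovβ⟩ := totallyBounded_iff.1 hβ δ hδ
  have := htα.fintype
  have := htβ.fintype
  choose round hround_mem hround using fun y : β => by
    simpa using hcovβ (mem_univ y)
  refine ⟨tα → tβ, inferInstance, fun f s => ⟨round (f.1 s), hround_mem _⟩, ?_⟩
  rintro ⟨f, hf⟩ ⟨g, hg⟩ hfg
  have hnet : ∀ s ∈ tα, dist (f s) (g s) ≤ 2 * δ := fun s hs => by
    have hsame : round (f s) = round (g s) := congrArg Subtype.val (congrFun hfg ⟨s, hs⟩)
    calc dist (f s) (g s) ≤ dist (f s) (round (f s)) + dist (g s) (round (g s)) :=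
          hsame ▸ dist_triangle_right _ _ _
      _ ≤ 2 * δ := by linarith [hround (f s), hround (g s)]
  calc dist f g ≤ 2 * K * δ + 2 * δ :=
        dist_le_of_lipschitzWith_of_forall_mem_net hf hg hδ.le (by positivity) hcovα hnet
    _ < (2 * K + 3) * δ := by linarith
    _ = ε := by rw [hδ_def]; field_simp

end BoundedContinuousFunction

/-- **Lemma of the Appendix.** If `S` and `T` are totally bounded (as pseudometric /
metric spaces), then the set of distance-preserving maps from `S` to `T`, viewed inside
the space of bounded continuous functions with the supremum metric, is totally bounded. -/
theorem distance_preserving_maps_totallyBounded {S T : Type*}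
    [PseudoMetricSpace S] [MetricSpace T]
    (hS : TotallyBounded (Set.univ : Set S)) (hT : TotallyBounded (Set.univ : Set T)) :
    TotallyBounded {f : BoundedContinuousFunction S T |
      ∀ x y : S, dist (f x) (f y) = dist x y} :=
  (BoundedContinuousFunction.totallyBounded_setOf_lipschitzWith 1 hS hT).subset fun f hf =>
    LipschitzWith.of_dist_le_mul fun x y => by simp [hf x y]
end

section
/- Let X be a pseudometric space whose universal set is totally bounded, and let U : X → X satisfy dist (U x) (U y) = dist x y for all x, y ∈ X. Then for every ε > 0 there exists an integer n > 0 such that dist (U^[n] x) x < ε for every x ∈ X. -/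
/-!
Fix a finite `ε / 3`-net `t`. By pigeonhole on a finite `ε / 6`-net, the finitely many orbits
`m ↦ U^[m] c` (`c ∈ t`) come simultaneously `ε / 3`-close at two times `i < j`; as `U^[i]` is an
isometry, `n = j - i` moves every point of `t` by less than `ε / 3`, and hence, again because
`U^[n]` is an isometry, every point of `X` by less than `ε`.
-/

open Function Metric

section

variable {X : Type*} [PseudoMetricSpace X]

theorem Isometry.iterate_s14 {f : X → X} (hf : Isometry f) : ∀ n : ℕ, Isometry f^[n]
  | 0 => isometry_id
  | n + 1 => (hf.iterate_s14 n).comp hf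

theorem Isometry.dist_iterate_sub_self {f : X → X} (hf : Isometry f) {i j : ℕ} (hij : i ≤ j)
    (x : X) : dist (f^[j - i] x) x = dist (f^[j] x) (f^[i] x) := by
  rw [← (hf.iterate_s14 i).dist_eq, ← iterate_add_apply, Nat.add_sub_cancel' hij]

theorem TotallyBounded.exists_lt_forall_dist_lt {s : Set X} (hs : TotallyBounded s)
    {ι : Type*} [Finite ι] (u : ℕ → ι → X) (hu : ∀ m c, u m c ∈ s) {δ : ℝ} (hδ : 0 < δ) :
    ∃ i j, i < j ∧ ∀ c, dist (u j c) (u i c) < δ := by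
  obtain ⟨t, -, htf, hst⟩ := finite_approx_of_totallyBounded hs (δ / 2) (half_pos hδ)
  have hnet : ∀ m c, ∃ y ∈ t, dist (u m c) y < δ / 2 := fun m c => by
    simpa only [Set.mem_iUnion, mem_ball, exists_prop] using hst (hu m c)
  choose g hgt hgu using hnet
  obtain ⟨i, j, hij, hg⟩ := (Set.Finite.pi fun _ => htf).exists_lt_map_eq_of_forall_mem
    (f := g) fun m => Set.mem_univ_pi.2 (hgt m)
  refine ⟨i, j, hij, fun c => ?_⟩
  calc dist (u j c) (u i c) ≤ dist (u j c) (g j c) + dist (g i c) (u i c) := by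
        rw [hg]; exact dist_triangle _ _ _
    _ < δ / 2 + δ / 2 := add_lt_add (hgu j c) (by rw [dist_comm]; exact hgu i c)
    _ = δ := add_halves δ

theorem Isometry.exists_iterate_forall_dist_lt {f : X → X} (hf : Isometry f)
    (hX : TotallyBounded (Set.univ : Set X)) {ι : Type*} [Finite ι] (x : ι → X) {δ : ℝ}
    (hδ : 0 < δ) : ∃ n, 0 < n ∧ ∀ c, dist (f^[n] (x c)) (x c) < δ := by
  obtain ⟨i, j, hij, hclose⟩ := hX.exists_lt_forall_dist_lt (fun m c => f^[m] (x c))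
    (fun _ _ => Set.mem_univ _) hδ
  exact ⟨j - i, Nat.sub_pos_of_lt hij, fun c =>
    (hf.dist_iterate_sub_self hij.le _).trans_lt (hclose c)⟩

end

/-- **Uniform Metric Recurrence Theorem.** Any totally bounded, metric-preserving
dynamical system on a pseudometric space is uniformly recurrent in metric. -/
theorem uniform_metric_recurrence {X : Type*} [PseudoMetricSpace X]
    (hX : TotallyBounded (Set.univ : Set X))
    (U : X → X) (hU : ∀ x y : X, dist (U x) (U y) = dist x y)
    (ε : ℝ) (hε : 0 < ε) :
    ∃ n : ℕ, 0 < n ∧ ∀ x : X, dist (U^[n] x) x < ε := by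
  have hUi : Isometry U := .of_dist_eq hU
  obtain ⟨t, -, htf, hcover⟩ := finite_approx_of_totallyBounded hX (ε / 3) (by positivity)
  have : Finite t := htf.to_subtype
  obtain ⟨n, hn, hnet⟩ := hUi.exists_iterate_forall_dist_lt hX ((↑) : t → X) (δ := ε / 3)
    (by positivity)
  refine ⟨n, hn, fun x => ?_⟩
  obtain ⟨c, hct, hxc⟩ : ∃ c ∈ t, dist x c < ε / 3 := by
    simpa only [Set.mem_iUnion, mem_ball, exists_prop] using hcover (Set.mem_univ x)
  calc dist (U^[n] x) x ≤ dist (U^[n] x) (U^[n] c) + dist (U^[n] c) c + dist c x :=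
        dist_triangle4 _ _ _ _
    _ < ε / 3 + ε / 3 + ε / 3 := by
        rw [(hUi.iterate_s14 n).dist_eq, dist_comm c]
        gcongr
        exact hnet ⟨c, hct⟩
    _ = ε := by ring
end

section
/- Let X be a compact metric space and let U : X → X satisfy dist (U x) (U y) = dist x y for all x, y ∈ X. Then for every ε > 0 there exists an integer n > 0 such that dist (U^[n] x) x < ε for every x ∈ X. -/
/-!
Fix a finite `ε/3`-net `t`. The orbits of the net points form a sequence `n ↦ (Uⁿ c)_{c ∈ t}` in
the totally bounded space `X^t`, so two of its terms, at times `m < k`, are `ε/3`-close. As `Uᵐ` is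
an isometry, `Uᵏ⁻ᵐ` moves every net point by less than `ε/3`, hence every point by less than `ε`.
-/

open Set Metric

theorem TotallyBounded.pi {ι : Type*} [Fintype ι] {X : ι → Type*} [∀ i, PseudoMetricSpace (X i)]
    {s : ∀ i, Set (X i)} (hs : ∀ i, TotallyBounded (s i)) : TotallyBounded (univ.pi s) := by
  refine totallyBounded_iff.2 fun ε hε => ?_
  choose t htfin hcover using fun i => totallyBounded_iff.1 (hs i) ε hε
  refine ⟨univ.pi t, Set.Finite.pi htfin, fun x hx => ?_⟩
  have hnear : ∀ i, ∃ y ∈ t i, dist (x i) y < ε := fun i => by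
    simpa only [mem_iUnion, mem_ball, exists_prop] using hcover i (hx i (mem_univ i))
  choose y hyt hy using hnear
  exact mem_biUnion (fun i _ => hyt i) ((dist_pi_lt_iff hε).2 hy)

theorem TotallyBounded.exists_lt_dist_lt {X : Type*} [PseudoMetricSpace X] {s : Set X}
    (hs : TotallyBounded s) {u : ℕ → X} (hu : ∀ n, u n ∈ s) {ε : ℝ} (hε : 0 < ε) :
    ∃ m k, m < k ∧ dist (u m) (u k) < ε := by
  obtain ⟨t, htfin, hcover⟩ := totallyBounded_iff.1 hs (ε / 2) (half_pos hε)
  have hnear : ∀ n, ∃ y : t, dist (u n) y < ε / 2 := fun n => by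
    simpa only [mem_iUnion, mem_ball, exists_prop, Subtype.exists] using hcover (hu n)
  choose y hy using hnear
  have := htfin.to_subtype
  obtain ⟨m, k, hne, hmk⟩ := Finite.exists_ne_map_eq_of_infinite y
  have hclose : ∀ {i j}, y i = y j → dist (u i) (u j) < ε := fun {i j} hij =>
    calc dist (u i) (u j) ≤ dist (u i) (y i) + dist (u j) (y j) := by
          rw [hij]; exact dist_triangle_right _ _ _
      _ < ε / 2 + ε / 2 := add_lt_add (hy i) (hy j)
      _ = ε := add_halves ε
  rcases hne.lt_or_gt with hlt | hlt
  · exact ⟨m, k, hlt, hclose hmk⟩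
  · exact ⟨k, m, hlt, hclose hmk.symm⟩

namespace Isometry

variable {X : Type*} [PseudoMetricSpace X] {U : X → X}

protected theorem iterate_s15 (hU : Isometry U) (n : ℕ) : Isometry U^[n] := by
  induction n with
  | zero => exact isometry_id
  | succ n ih => exact ih.comp hU

theorem dist_iterate_iterate_of_le (hU : Isometry U) {m k : ℕ} (hmk : m ≤ k) (x : X) :
    dist (U^[k] x) (U^[m] x) = dist (U^[k - m] x) x := by
  rw [← (hU.iterate_s15 m).dist_eq (U^[k - m] x), ← Function.iterate_add_apply,
    Nat.add_sub_cancel' hmk]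

theorem exists_pos_iterate_dist_lt (hU : Isometry U) (hX : TotallyBounded (univ : Set X))
    {ε : ℝ} (hε : 0 < ε) : ∃ n, 0 < n ∧ ∀ x, dist (U^[n] x) x < ε := by
  obtain ⟨t, htfin, hcover⟩ := totallyBounded_iff.1 hX (ε / 3) (by positivity)
  have : Fintype t := htfin.fintype
  have hXt : TotallyBounded (univ : Set (t → X)) := by
    simpa only [pi_univ] using TotallyBounded.pi fun _ : t => hX
  obtain ⟨m, k, hmk, horbit⟩ := hXt.exists_lt_dist_lt (u := fun n (c : t) => U^[n] c)
    (fun _ => mem_univ _) (by positivity : 0 < ε / 3)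
  refine ⟨k - m, Nat.sub_pos_of_lt hmk, fun x => ?_⟩
  obtain ⟨c, hct, hxc⟩ : ∃ c ∈ t, dist x c < ε / 3 := by
    simpa only [mem_iUnion, mem_ball, exists_prop] using hcover (mem_univ x)
  have hc : dist (U^[k - m] c) c < ε / 3 := by
    rw [← hU.dist_iterate_iterate_of_le hmk.le, dist_comm]
    exact (dist_le_pi_dist _ _ ⟨c, hct⟩).trans_lt horbit
  calc dist (U^[k - m] x) x
        ≤ dist (U^[k - m] x) (U^[k - m] c) + dist (U^[k - m] c) c + dist c x :=
          dist_triangle4 _ _ _ _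
    _ = dist x c + dist (U^[k - m] c) c + dist x c := by rw [(hU.iterate_s15 _).dist_eq, dist_comm c]
    _ < ε / 3 + ε / 3 + ε / 3 := by gcongr
    _ = ε := by ring

end Isometry

/-- **Uniform recurrence on compact metric spaces.** Any metric-preserving dynamical
system on a compact metric space is uniformly recurrent in metric. -/
theorem compact_uniform_metric_recurrence {X : Type*} [MetricSpace X] [CompactSpace X]
    (U : X → X) (hU : ∀ x y : X, dist (U x) (U y) = dist x y)
    (ε : ℝ) (hε : 0 < ε) :
    ∃ n : ℕ, 0 < n ∧ ∀ x : X, dist (U^[n] x) x < ε :=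
  (Isometry.of_dist_eq hU).exists_pos_iterate_dist_lt isCompact_univ.totallyBounded hε
end
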